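/- Let A be a real symmetric matrix of order n, and let G₋(A) be the simple graph on vertex set {1,…,n} in which i ≠ j are adjacent if and only if a_ij < 0. Then: (i) A is copositive if and only if for every vertex set α of a connected component of G₋(A), the principal submatrix A[α] is copositive; (ii) A is SPN if and only if for every vertex set α of a connected component of G₋(A), the principal submatrix A[α] is SPN. -/

import Mathlib

/-!
Entries of `A` joining two different components of `G₋(A)` are nonnegative, so after reindexing
the vertices by components, `A` is the block-diagonal matrix of the blocks `A[α]` plus a symmetric
entrywise nonnegative matrix. Both copositivity and the SPN property pass to principal submatrices,
to block-diagonal matrices built from such blocks, and survive adding a symmetric nonnegative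
matrix.
-/

open Matrix

/-- A real symmetric matrix `A` is *copositive* if `xᵀAx ≥ 0` for every
entrywise nonnegative vector `x`. -/
def Copositive {ι : Type*} [Fintype ι] (A : Matrix ι ι ℝ) : Prop :=
  ∀ x : ι → ℝ, (∀ i, 0 ≤ x i) → 0 ≤ x ⬝ᵥ A.mulVec x

/-- A real symmetric matrix is *SPN* if it is the sum of a positive semidefinite
matrix and a symmetric entrywise nonnegative matrix. -/
def IsSPN {ι : Type*} [Fintype ι] (A : Matrix ι ι ℝ) : Prop :=
  ∃ P N : Matrix ι ι ℝ, P.PosSemidef ∧ N.IsSymm ∧ (∀ i j, 0 ≤ N i j) ∧ A = P + N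

/-- The graph `G₋(A)`: `i ≠ j` are adjacent iff `A i j < 0`. -/
def negGraph {ι : Type*} (A : Matrix ι ι ℝ) : SimpleGraph ι where
  Adj i j := i ≠ j ∧ (A i j < 0 ∨ A j i < 0)
  symm := by
    constructor
    intro i j h
    exact ⟨h.1.symm, h.2.symm⟩
  loopless := by
    constructor
    intro i h
    exact h.1 rfl

section

variable {ι κ : Type*} [Fintype ι] [Fintype κ] {A : Matrix ι ι ℝ}

theorem Copositive.transpose_mul_mul_of_nonneg (hA : Copositive A) {B : Matrix ι κ ℝ}
    (hB : ∀ i k, 0 ≤ B i k) : Copositive (Bᵀ * A * B) := by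
  intro x hx
  rw [← mulVec_mulVec, ← mulVec_mulVec, dotProduct_mulVec, vecMul_transpose]
  exact hA _ fun i => Finset.sum_nonneg fun k _ => mul_nonneg (hB i k) (hx k)

theorem Copositive.submatrix (hA : Copositive A) (e : κ → ι) : Copositive (A.submatrix e e) := by
  classical
  have hB : A.submatrix e e =
      ((1 : Matrix ι ι ℝ).submatrix id e)ᵀ * A * (1 : Matrix ι ι ℝ).submatrix id e := by
    ext k l
    simp [mul_apply, one_apply]
  rw [hB]
  exact hA.transpose_mul_mul_of_nonneg fun i k => by
    rw [submatrix_apply, one_apply]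
    split_ifs <;> norm_num

theorem Copositive.add_nonneg (hA : Copositive A) {N : Matrix ι ι ℝ} (hN : ∀ i j, 0 ≤ N i j) :
    Copositive (A + N) := by
  intro x hx
  rw [add_mulVec, dotProduct_add]
  exact _root_.add_nonneg (hA x hx) <| dotProduct_nonneg_of_nonneg hx fun i =>
    Finset.sum_nonneg fun j _ => mul_nonneg (hN i j) (hx j)

theorem copositive_submatrix_equiv (e : κ ≃ ι) : Copositive (A.submatrix e e) ↔ Copositive A :=
  ⟨fun h => by simpa using h.submatrix e.symm, fun h => h.submatrix e⟩

theorem IsSPN.submatrix (hA : IsSPN A) (e : κ → ι) : IsSPN (A.submatrix e e) := by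
  obtain ⟨P, N, hP, hN, hN0, rfl⟩ := hA
  exact ⟨_, _, hP.submatrix e, hN.submatrix e, fun i j => hN0 _ _,
    congrFun₂ (submatrix_add P N) e e⟩

theorem IsSPN.add_nonneg (hA : IsSPN A) {N : Matrix ι ι ℝ} (hN : N.IsSymm)
    (hN0 : ∀ i j, 0 ≤ N i j) : IsSPN (A + N) := by
  obtain ⟨P, N', hP, hN', hN'0, rfl⟩ := hA
  exact ⟨P, N' + N, hP, hN'.add hN, fun i j => add_nonneg (hN'0 i j) (hN0 i j), add_assoc _ _ _⟩

theorem isSPN_submatrix_equiv (e : κ ≃ ι) : IsSPN (A.submatrix e e) ↔ IsSPN A :=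
  ⟨fun h => by simpa using h.submatrix e.symm, fun h => h.submatrix e⟩

end

section

variable {κ : Type*} [DecidableEq κ] {m : κ → Type*}

theorem blockDiagonal'_add_offDiagonalBlocks {R : Type*} [AddZeroClass R]
    (M : Matrix (Σ c, m c) (Σ c, m c) R) :
    blockDiagonal' (fun c => M.submatrix (Sigma.mk c) (Sigma.mk c)) +
      of (fun a b => if a.1 = b.1 then 0 else M a b) = M := by
  ext ⟨c, i⟩ ⟨d, j⟩
  by_cases h : c = d
  · subst h
    simp [blockDiagonal'_apply_eq]
  · simp [blockDiagonal'_apply_ne _ _ _ h, h]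

variable [Fintype κ] [∀ c, Fintype (m c)]

theorem dotProduct_blockDiagonal'_mulVec {R : Type*} [NonUnitalNonAssocSemiring R]
    (M : ∀ c, Matrix (m c) (m c) R) (x y : (Σ c, m c) → R) :
    x ⬝ᵥ (blockDiagonal' M *ᵥ y) = ∑ c, (fun i => x ⟨c, i⟩) ⬝ᵥ (M c *ᵥ fun i => y ⟨c, i⟩) := by
  simp only [dotProduct, mulVec, Fintype.sum_sigma]
  refine Finset.sum_congr rfl fun c _ => Finset.sum_congr rfl fun i _ => ?_
  rw [Finset.sum_eq_single c (fun d _ hd => Finset.sum_eq_zero fun j _ => by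
    rw [blockDiagonal'_apply_ne _ _ _ hd.symm, zero_mul]) (by simp)]
  simp only [blockDiagonal'_apply_eq]

theorem Matrix.PosSemidef.blockDiagonal' {R : Type*} [CommRing R] [PartialOrder R] [StarRing R]
    [IsOrderedAddMonoid R] {M : ∀ c, Matrix (m c) (m c) R} (hM : ∀ c, (M c).PosSemidef) :
    (blockDiagonal' M).PosSemidef := by
  refine .of_dotProduct_mulVec_nonneg
    (isHermitian_blockDiagonal'_iff.mpr fun c => (hM c).1) fun x => ?_
  rw [dotProduct_blockDiagonal'_mulVec]
  exact Finset.sum_nonneg fun c _ => (hM c).dotProduct_mulVec_nonneg _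

theorem Copositive.blockDiagonal' {M : ∀ c, Matrix (m c) (m c) ℝ} (hM : ∀ c, Copositive (M c)) :
    Copositive (blockDiagonal' M) := by
  intro x hx
  rw [dotProduct_blockDiagonal'_mulVec]
  exact Finset.sum_nonneg fun c _ => hM c _ fun i => hx _

theorem IsSPN.blockDiagonal' {M : ∀ c, Matrix (m c) (m c) ℝ} (hM : ∀ c, IsSPN (M c)) :
    IsSPN (blockDiagonal' M) := by
  choose P N hP hN hN0 hPN using hM
  refine ⟨Matrix.blockDiagonal' P, Matrix.blockDiagonal' N, .blockDiagonal' hP, ?_, ?_, ?_⟩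
  · exact (blockDiagonal'_transpose N).trans (congrArg _ (funext hN))
  · rintro ⟨c, i⟩ ⟨d, j⟩
    rw [blockDiagonal'_apply]
    split_ifs with h
    exacts [hN0 _ _ _, le_rfl]
  · rw [← blockDiagonal'_add]
    exact congrArg _ (funext hPN)

theorem copositive_iff_forall_diagonal_blocks {M : Matrix (Σ c, m c) (Σ c, m c) ℝ}
    (hM : ∀ a b, a.1 ≠ b.1 → 0 ≤ M a b) :
    Copositive M ↔ ∀ c, Copositive (M.submatrix (Sigma.mk c) (Sigma.mk c)) := by
  refine ⟨fun h c => h.submatrix _, fun h => ?_⟩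
  rw [← blockDiagonal'_add_offDiagonalBlocks M]
  refine (Copositive.blockDiagonal' h).add_nonneg fun a b => ?_
  dsimp only [of_apply]
  split_ifs with hab
  exacts [le_rfl, hM a b hab]

theorem isSPN_iff_forall_diagonal_blocks {M : Matrix (Σ c, m c) (Σ c, m c) ℝ}
    (hMs : M.IsSymm) (hM : ∀ a b, a.1 ≠ b.1 → 0 ≤ M a b) :
    IsSPN M ↔ ∀ c, IsSPN (M.submatrix (Sigma.mk c) (Sigma.mk c)) := by
  refine ⟨fun h c => h.submatrix _, fun h => ?_⟩
  rw [← blockDiagonal'_add_offDiagonalBlocks M]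
  refine (IsSPN.blockDiagonal' h).add_nonneg ?_ fun a b => ?_
  · ext a b
    simp [eq_comm, hMs.apply]
  · dsimp only [of_apply]
    split_ifs with hab
    exacts [le_rfl, hM a b hab]

end

section

variable {ι κ : Type*} [Fintype ι] [Fintype κ] [DecidableEq κ] {A : Matrix ι ι ℝ}

theorem copositive_iff_forall_fibers (f : ι → κ) (hA : ∀ i j, f i ≠ f j → 0 ≤ A i j) :
    Copositive A ↔
      ∀ c, Copositive (A.submatrix (Subtype.val : {i // f i = c} → ι) Subtype.val) := by
  rw [← copositive_submatrix_equiv (Equiv.sigmaFiberEquiv f)]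
  refine copositive_iff_forall_diagonal_blocks ?_
  rintro ⟨c, i, rfl⟩ ⟨d, j, rfl⟩ hcd
  exact hA i j hcd

theorem isSPN_iff_forall_fibers (hAs : A.IsSymm) (f : ι → κ)
    (hA : ∀ i j, f i ≠ f j → 0 ≤ A i j) :
    IsSPN A ↔ ∀ c, IsSPN (A.submatrix (Subtype.val : {i // f i = c} → ι) Subtype.val) := by
  rw [← isSPN_submatrix_equiv (Equiv.sigmaFiberEquiv f)]
  refine isSPN_iff_forall_diagonal_blocks (hAs.submatrix _) ?_
  rintro ⟨c, i, rfl⟩ ⟨d, j, rfl⟩ hcd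
  exact hA i j hcd

end

theorem negGraph.nonneg_of_connectedComponentMk_ne {ι : Type*} {A : Matrix ι ι ℝ} {i j : ι}
    (h : (negGraph A).connectedComponentMk i ≠ (negGraph A).connectedComponentMk j) :
    0 ≤ A i j := by
  by_contra hij
  exact h (SimpleGraph.ConnectedComponent.connectedComponentMk_eq_of_adj
    ⟨fun e => h (e ▸ rfl), .inl (not_le.mp hij)⟩)

open scoped Classical in
/-- A symmetric real matrix `A` is copositive (resp. SPN) iff for every
vertex set `α` of a connected component of `G₋(A)` the principal submatrix `A[α]`
is copositive (resp. SPN). -/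
theorem copositive_and_isSPN_iff_negGraph_components
    (n : ℕ) (A : Matrix (Fin n) (Fin n) ℝ) (hA : A.IsSymm) :
    (Copositive A ↔ ∀ c : (negGraph A).ConnectedComponent,
      Copositive (A.submatrix
        (fun i : {i : Fin n // (negGraph A).connectedComponentMk i = c} => i.val)
        (fun i : {i : Fin n // (negGraph A).connectedComponentMk i = c} => i.val))) ∧
    (IsSPN A ↔ ∀ c : (negGraph A).ConnectedComponent,
      IsSPN (A.submatrix
        (fun i : {i : Fin n // (negGraph A).connectedComponentMk i = c} => i.val)
        (fun i : {i : Fin n // (negGraph A).connectedComponentMk i = c} => i.val))) :=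
  ⟨copositive_iff_forall_fibers _ fun _ _ => negGraph.nonneg_of_connectedComponentMk_ne,
    isSPN_iff_forall_fibers hA _ fun _ _ => negGraph.nonneg_of_connectedComponentMk_ne⟩
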